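/- arXiv:1111.0363 — 2 statements merged into one kernel-verified Lean document; each statement's English description precedes it below -/
import Mathlib

section
/- For λ > 0 and all real u, v ∈ (-1,1), ∫_{-1}^{1} D_λ(v, u, p) (1-p²)^λ dp = 2^{2λ} B(λ+1/2, λ+1/2), where B is the Beta function. -/
open Real intervalIntegral

/-- The kernel `D_λ(v, p, u)` of Xu, equal to
`(1 - v² - p² - u² + 2upv)^{λ-1/2} / [(1-v²)(1-u²)(1-p²)]^λ` when
`1 - v² - p² - u² + 2upv ≥ 0` and `0` otherwise. -/
noncomputable def Dker (lam v p u : ℝ) : ℝ :=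
  if 0 ≤ 1 - v ^ 2 - p ^ 2 - u ^ 2 + 2 * u * p * v then
    (1 - v ^ 2 - p ^ 2 - u ^ 2 + 2 * u * p * v) ^ (lam - 1 / 2) /
      ((1 - v ^ 2) * (1 - u ^ 2) * (1 - p ^ 2)) ^ lam
  else 0

/-! On `(-1, 1)` the quadratic in `Dker` is `1 - v² - u² - p² + 2puv = s² - (p - uv)²` with
`s² = (1 - v²)(1 - u²)`, so the weight `(1 - p²)^λ` cancels against the denominator and the
integrand becomes `(s² - (p - uv)²)^{λ-1/2} / s^{2λ}` on the chord `[uv - s, uv + s]`, which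
lies in `[-1, 1]`, and `0` off it. The affine change `p = uv + s t` produces a factor `s^{2λ}`
and leaves `∫_{-1}^1 (1 - t²)^{λ-1/2} dt`, which the same change of variables with
`s = c = 1/2` turns into the Beta integral `2^{2λ} B(λ + 1/2, λ + 1/2)`. -/

open MeasureTheory Set

theorem intervalIntegral.integral_indicator_Icc {μ : Measure ℝ} [NullSingletonClass μ]
    {f : ℝ → ℝ} {a b c d : ℝ} (hac : a ≤ c) (hcd : c ≤ d) (hdb : d ≤ b) :
    ∫ x in a..b, (Icc c d).indicator f x ∂μ = ∫ x in c..d, f x ∂μ := by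
  have hIoc : (Icc c d).indicator f =ᵐ[μ] (Ioc c d).indicator f :=
    indicator_ae_eq_of_ae_eq_set Ioc_ae_eq_Icc.symm
  rw [integral_of_le (hac.trans (hcd.trans hdb)), integral_of_le hcd,
    MeasureTheory.integral_congr_ae (ae_restrict_of_ae hIoc),
    setIntegral_indicator measurableSet_Ioc,
    inter_eq_self_of_subset_right (Ioc_subset_Ioc hac hdb)]

theorem integral_sq_sub_sq_rpow {s : ℝ} (hs : 0 < s) (c β : ℝ) :
    ∫ p in c - s..c + s, (s ^ 2 - (p - c) ^ 2) ^ β =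
      s ^ (2 * β + 1) * ∫ t in (-1 : ℝ)..1, (1 - t ^ 2) ^ β := by
  have hsub := smul_integral_comp_mul_add (fun p => (s ^ 2 - (p - c) ^ 2) ^ β)
    (a := -1) (b := 1) s c
  rw [smul_eq_mul, show s * -1 + c = c - s by ring, show s * 1 + c = c + s by ring] at hsub
  rw [← hsub, ← intervalIntegral.integral_const_mul, ← intervalIntegral.integral_const_mul]
  refine integral_congr fun t ht => ?_
  rw [uIcc_of_le (by norm_num)] at ht
  have ht2 : 0 ≤ 1 - t ^ 2 := by nlinarith [ht.1, ht.2]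
  rw [show s ^ 2 - (s * t + c - c) ^ 2 = s ^ 2 * (1 - t ^ 2) by ring,
    mul_rpow (sq_nonneg s) ht2, ← rpow_natCast_mul hs.le, rpow_add hs, rpow_one]
  push_cast
  ring

theorem integral_rpow_mul_one_sub_rpow {a b : ℝ} (ha : 0 < a) (hb : 0 < b) :
    ∫ x in (0 : ℝ)..1, x ^ (a - 1) * (1 - x) ^ (b - 1) = ProbabilityTheory.beta a b := by
  have hbeta : Complex.betaIntegral a b =
      ((∫ x in (0 : ℝ)..1, x ^ (a - 1) * (1 - x) ^ (b - 1) : ℝ) : ℂ) := by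
    rw [Complex.betaIntegral, ← integral_ofReal]
    refine integral_congr fun x hx => ?_
    rw [uIcc_of_le zero_le_one] at hx
    push_cast
    rw [Complex.ofReal_cpow hx.1, Complex.ofReal_cpow (sub_nonneg.2 hx.2)]
    push_cast
    ring
  rw [ProbabilityTheory.beta_eq_betaIntegralReal a b ha hb, hbeta, Complex.ofReal_re]

theorem integral_one_sub_sq_rpow {β : ℝ} (hβ : -1 < β) :
    ∫ t in (-1 : ℝ)..1, (1 - t ^ 2) ^ β =
      2 ^ (2 * β + 1) * ProbabilityTheory.beta (β + 1) (β + 1) := by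
  have hhalf := integral_sq_sub_sq_rpow (s := 1 / 2) (by norm_num) (1 / 2) β
  have hbeta : ∫ x in (0 : ℝ)..1, ((1 / 2) ^ 2 - (x - 1 / 2) ^ 2) ^ β =
      ProbabilityTheory.beta (β + 1) (β + 1) := by
    rw [← integral_rpow_mul_one_sub_rpow (by linarith) (by linarith)]
    refine integral_congr fun x hx => ?_
    rw [uIcc_of_le zero_le_one] at hx
    rw [show (1 / 2 : ℝ) ^ 2 - (x - 1 / 2) ^ 2 = x * (1 - x) by ring,
      mul_rpow hx.1 (sub_nonneg.2 hx.2), add_sub_cancel_right]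
  rw [show (1 / 2 : ℝ) - 1 / 2 = 0 by norm_num, show (1 / 2 : ℝ) + 1 / 2 = 1 by norm_num,
    hbeta, div_rpow zero_le_one zero_le_two, one_rpow] at hhalf
  rw [hhalf]
  field_simp

theorem mul_add_sqrt_le_one {u v : ℝ} (hu : u ^ 2 ≤ 1) (hv : v ^ 2 ≤ 1) :
    u * v + √((1 - v ^ 2) * (1 - u ^ 2)) ≤ 1 := by
  have huv : u * v ≤ 1 := by nlinarith [sq_nonneg (u - v)]
  suffices √((1 - v ^ 2) * (1 - u ^ 2)) ≤ 1 - u * v by linarith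
  exact sqrt_le_iff.2 ⟨by linarith, by nlinarith [sq_nonneg (u - v)]⟩

theorem Dker_mul_rpow_eq_indicator (lam : ℝ) {u v p s : ℝ} (hs : 0 ≤ s)
    (hs2 : s ^ 2 = (1 - v ^ 2) * (1 - u ^ 2)) (hp : 0 < 1 - p ^ 2) :
    Dker lam v u p * (1 - p ^ 2) ^ lam =
      (Icc (u * v - s) (u * v + s)).indicator
        (fun q => (s ^ 2 - (q - u * v) ^ 2) ^ (lam - 1 / 2) / (s ^ 2) ^ lam) p := by
  have hQ : 1 - v ^ 2 - u ^ 2 - p ^ 2 + 2 * p * u * v = s ^ 2 - (p - u * v) ^ 2 := by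
    rw [hs2]; ring
  have hmem : p ∈ Icc (u * v - s) (u * v + s) ↔ 0 ≤ s ^ 2 - (p - u * v) ^ 2 := by
    rw [sub_nonneg, sq_le_sq, abs_of_nonneg hs, abs_le, mem_Icc]
    constructor <;> rintro ⟨h₁, h₂⟩ <;> constructor <;> linarith
  have hden : ((1 - v ^ 2) * (1 - p ^ 2) * (1 - u ^ 2)) ^ lam =
      (s ^ 2) ^ lam * (1 - p ^ 2) ^ lam := by
    rw [← mul_rpow (sq_nonneg s) hp.le, hs2]; ring_nf
  have hp_pos : 0 < (1 - p ^ 2) ^ lam := rpow_pos_of_pos hp lam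
  unfold Dker
  rw [hQ, hden]
  by_cases h : 0 ≤ s ^ 2 - (p - u * v) ^ 2
  · rw [if_pos h, indicator_of_mem (hmem.2 h)]
    field_simp
  · rw [if_neg h, indicator_of_notMem (mt hmem.1 h), zero_mul]

/-- For `λ > 0` and `u, v ∈ (-1,1)`,
`∫_{-1}^1 D_λ(v,u,p) (1-p²)^λ dp = 2^{2λ} B(λ+1/2, λ+1/2)`. -/
theorem integral_Dker (lam : ℝ) (hlam : 0 < lam) (u v : ℝ)
    (hu : u ∈ Set.Ioo (-1 : ℝ) 1) (hv : v ∈ Set.Ioo (-1 : ℝ) 1) :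
    ∫ p in (-1 : ℝ)..1, Dker lam v u p * (1 - p ^ 2) ^ lam =
      2 ^ (2 * lam) *
        (Real.Gamma (lam + 1 / 2) * Real.Gamma (lam + 1 / 2) /
          Real.Gamma (lam + 1 / 2 + (lam + 1 / 2))) := by
  have hu2 : u ^ 2 < 1 := by nlinarith [hu.1, hu.2]
  have hv2 : v ^ 2 < 1 := by nlinarith [hv.1, hv.2]
  have hA : 0 < (1 - v ^ 2) * (1 - u ^ 2) := mul_pos (by linarith) (by linarith)
  set s := √((1 - v ^ 2) * (1 - u ^ 2))
  have hs : 0 < s := sqrt_pos.2 hA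
  have hs2 : s ^ 2 = (1 - v ^ 2) * (1 - u ^ 2) := sq_sqrt hA.le
  have hupper : u * v + s ≤ 1 := mul_add_sqrt_le_one hu2.le hv2.le
  have hlower : -1 ≤ u * v - s := by
    have := mul_add_sqrt_le_one (u := -u) (by rw [neg_sq]; exact hu2.le) hv2.le
    rw [neg_sq] at this
    linarith
  have hkernel : ∀ᵐ p, p ∈ uIoc (-1 : ℝ) 1 → Dker lam v u p * (1 - p ^ 2) ^ lam =
      (Icc (u * v - s) (u * v + s)).indicator
        (fun q => (s ^ 2 - (q - u * v) ^ 2) ^ (lam - 1 / 2) / (s ^ 2) ^ lam) p := by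
    filter_upwards [Measure.ae_ne volume 1] with p hp1 hp
    rw [uIoc_of_le (by norm_num)] at hp
    exact Dker_mul_rpow_eq_indicator lam hs.le hs2
      (by nlinarith [hp.1, lt_of_le_of_ne hp.2 hp1])
  calc _ = ∫ p in u * v - s..u * v + s,
          (s ^ 2 - (p - u * v) ^ 2) ^ (lam - 1 / 2) / (s ^ 2) ^ lam := by
        rw [integral_congr_ae hkernel, integral_indicator_Icc hlower (by linarith) hupper]
    _ = ∫ t in (-1 : ℝ)..1, (1 - t ^ 2) ^ (lam - 1 / 2) := by
        rw [intervalIntegral.integral_div, integral_sq_sub_sq_rpow hs,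
          show 2 * (lam - 1 / 2) + 1 = 2 * lam by ring, ← rpow_natCast_mul hs.le]
        push_cast
        field_simp
    _ = _ := by
        rw [integral_one_sub_sq_rpow (by linarith), show 2 * (lam - 1 / 2) + 1 = 2 * lam by ring,
          show lam - 1 / 2 + 1 = lam + 1 / 2 by ring]
        rfl -- `ProbabilityTheory.beta a b` unfolds to `Γ a * Γ b / Γ (a + b)`
end

section
/- Let f : [-1,1] → ℝ be integrable against the weight (1-u²)^{(d-2)/2+μ} and let v ∈ [-1,1], μ ≥ 0, d ≥ 2. Then ∫_{-1}^1 ∫_{-1}^1 |f(p v + √(1-v²)√(1-p²) s)| (1-p²)^{(d-2)/2+μ} (1-s²)^{(d-3)/2+μ} ds dp ≤ c ∫_{-1}^1 |f(u)| (1-u²)^{(d-2)/2+μ} du, where c depends only on d and μ. -/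
/-!
Write `β = (d - 3)/2 + μ`, so that the outer exponent is `β + 1/2`. For `|v| < 1` and fixed `p`,
the affine substitution `u = p v + √(1 - v²) √(1 - p²) s` turns the inner integral into
`(1 - v²)^(-(β + 1/2)) ∫ |f u| G₊^β du`, where `G = 1 - p² - u² - v² + 2puv` (the Gram
determinant of three unit vectors) is symmetric in `p` and `u`. After Tonelli, the same
substitution in `p` gives `∫ G₊^β dp = ((1 - v²)(1 - u²))^(β + 1/2) B` with
`B = ∫_{-1}^1 (1 - t²)^β dt`, so the double integral equals `B ∫ |f u| (1 - u²)^(β + 1/2) du`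
exactly; for `v = ±1` this is immediate. All of this is done with `ℝ≥0∞`-valued integrals, and
the Bochner integrals are recovered at the end; `B < ∞` because `β > -1`.
-/

open Real MeasureTheory intervalIntegral Set ENNReal

/-- `z₊ ^ β`. Thus `posPartRpow β (1 - t ^ 2)` is the weight `(1 - t²)^β` on `(-1, 1)`, extended
by zero instead of by the junk values of `Real.rpow`. -/
noncomputable def posPartRpow (β z : ℝ) : ℝ≥0∞ :=
  if 0 < z then ENNReal.ofReal (z ^ β) else 0

lemma posPartRpow_of_pos {β z : ℝ} (hz : 0 < z) : posPartRpow β z = ENNReal.ofReal (z ^ β) :=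
  if_pos hz

lemma posPartRpow_of_nonpos {β z : ℝ} (hz : z ≤ 0) : posPartRpow β z = 0 :=
  if_neg hz.not_gt

lemma posPartRpow_ne_top (β z : ℝ) : posPartRpow β z ≠ ∞ := by
  unfold posPartRpow
  split_ifs <;> simp

lemma measurable_posPartRpow (β : ℝ) : Measurable (posPartRpow β) :=
  Measurable.ite measurableSet_Ioi (by fun_prop) measurable_const

lemma posPartRpow_mul {β a : ℝ} (ha : 0 < a) (z : ℝ) :
    posPartRpow β (a * z) = ENNReal.ofReal (a ^ β) * posPartRpow β z := by
  rcases lt_or_ge 0 z with hz | hz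
  · rw [posPartRpow_of_pos (mul_pos ha hz), posPartRpow_of_pos hz, mul_rpow ha.le hz.le,
      ofReal_mul (rpow_nonneg ha.le _)]
  · rw [posPartRpow_of_nonpos (mul_nonpos_of_nonneg_of_nonpos ha.le hz),
      posPartRpow_of_nonpos hz, mul_zero]

lemma enorm_one_sub_sq_rpow {t : ℝ} (ht : t ∈ Ioo (-1) 1) (β : ℝ) :
    ‖(1 - t ^ 2) ^ β‖ₑ = posPartRpow β (1 - t ^ 2) := by
  have h : 0 < 1 - t ^ 2 := by nlinarith [ht.1, ht.2]
  rw [posPartRpow_of_pos h, enorm_of_nonneg (rpow_nonneg h.le _)]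

lemma posPartRpow_one_sub_sq_of_notMem {t : ℝ} (ht : t ∉ Ioo (-1) 1) (β : ℝ) :
    posPartRpow β (1 - t ^ 2) = 0 := by
  refine posPartRpow_of_nonpos ?_
  rw [mem_Ioo, not_and_or, not_lt, not_lt] at ht
  rcases ht with h | h <;> nlinarith

lemma lintegral_comp_add_mul (φ : ℝ → ℝ≥0∞) (b : ℝ) {c : ℝ} (hc : 0 < c) :
    ∫⁻ s, φ (b + c * s) = ENNReal.ofReal c⁻¹ * ∫⁻ x, φ x := by
  rw [← (measurableEmbedding_mulLeft₀ hc.ne').lintegral_map (fun y => φ (b + y)),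
    Real.map_volume_mul_left hc.ne', lintegral_smul_measure, lintegral_add_left_eq_self,
    abs_of_pos (inv_pos.2 hc), smul_eq_mul]

lemma lintegral_mul_posPartRpow_sub_sq (φ : ℝ → ℝ≥0∞) (β : ℝ) {A : ℝ} (hA : 0 < A) (b : ℝ) :
    ∫⁻ x, φ x * posPartRpow β (A - (x - b) ^ 2) =
      ENNReal.ofReal (A ^ (β + 1 / 2)) * ∫⁻ s, φ (b + √A * s) * posPartRpow β (1 - s ^ 2) := by
  have hc : 0 < √A := sqrt_pos.2 hA
  have hrescale : ∀ s, 1 - s ^ 2 = A⁻¹ * (A - (b + √A * s - b) ^ 2) := by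
    intro s
    rw [add_sub_cancel_left, mul_pow, sq_sqrt hA.le]
    field_simp
  set k : ℝ≥0∞ := ENNReal.ofReal (A ^ (β + 1 / 2)) * ENNReal.ofReal (√A)⁻¹
  have hk : k * ENNReal.ofReal (A⁻¹ ^ β) = 1 := by
    simp only [k]
    rw [← ofReal_mul (by positivity), ← ofReal_mul (by positivity), sqrt_eq_rpow,
      inv_rpow hA.le, rpow_add hA, ← ofReal_one]
    congr 1
    field_simp
  simp_rw [hrescale, posPartRpow_mul (inv_pos.2 hA)]
  rw [lintegral_comp_add_mul (fun x => φ x * (ENNReal.ofReal (A⁻¹ ^ β) *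
    posPartRpow β (A - (x - b) ^ 2))) b hc, ← mul_assoc,
    ← lintegral_const_mul' _ _ (mul_ne_top ofReal_ne_top ofReal_ne_top)]
  congr 1 with x
  calc φ x * posPartRpow β (A - (x - b) ^ 2)
      = k * ENNReal.ofReal (A⁻¹ ^ β) * (φ x * posPartRpow β (A - (x - b) ^ 2)) := by
        rw [hk, one_mul]
    _ = _ := by ring

lemma lintegral_mul_posPartRpow_mul_one_sub_sq_sub_sq (φ : ℝ → ℝ≥0∞) (β : ℝ) {c : ℝ}
    (hc : 0 < c) (b y : ℝ) :
    ∫⁻ x, φ x * posPartRpow β (c * (1 - y ^ 2) - (x - b) ^ 2) =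
      ENNReal.ofReal (c ^ (β + 1 / 2)) * posPartRpow (β + 1 / 2) (1 - y ^ 2) *
        ∫⁻ s, φ (b + √c * √(1 - y ^ 2) * s) * posPartRpow β (1 - s ^ 2) := by
  rcases lt_or_ge 0 (1 - y ^ 2) with hy | hy
  · rw [lintegral_mul_posPartRpow_sub_sq φ β (mul_pos hc hy) b, posPartRpow_of_pos hy,
      ← ofReal_mul (rpow_nonneg hc.le _), ← mul_rpow hc.le hy.le, sqrt_mul hc.le]
  · have hcap : ∀ x, c * (1 - y ^ 2) - (x - b) ^ 2 ≤ 0 := fun x => by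
      nlinarith [sq_nonneg (x - b)]
    simp [posPartRpow_of_nonpos hy, posPartRpow_of_nonpos (hcap _)]

lemma lintegral_lintegral_cosineLaw_eq_of_sq_lt_one {g : ℝ → ℝ≥0∞} (hg : Measurable g) (β : ℝ)
    {v : ℝ} (hv : v ^ 2 < 1) :
    ∫⁻ p, ∫⁻ s, g (p * v + √(1 - v ^ 2) * √(1 - p ^ 2) * s) *
        posPartRpow (β + 1 / 2) (1 - p ^ 2) * posPartRpow β (1 - s ^ 2) =
      (∫⁻ t, posPartRpow β (1 - t ^ 2)) * ∫⁻ u, g u * posPartRpow (β + 1 / 2) (1 - u ^ 2) := by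
  have hc : 0 < 1 - v ^ 2 := by linarith
  set k := ENNReal.ofReal ((1 - v ^ 2) ^ (β + 1 / 2))
  have hk : k ≠ 0 := (ofReal_pos.2 (rpow_pos_of_pos hc _)).ne'
  let K : ℝ → ℝ → ℝ≥0∞ := fun p u => posPartRpow β ((1 - v ^ 2) * (1 - p ^ 2) - (u - p * v) ^ 2)
  have hK : Measurable (Function.uncurry K) := (measurable_posPartRpow β).comp (by fun_prop)
  have hinner : ∀ p, k * ∫⁻ s, g (p * v + √(1 - v ^ 2) * √(1 - p ^ 2) * s) *
      posPartRpow (β + 1 / 2) (1 - p ^ 2) * posPartRpow β (1 - s ^ 2) = ∫⁻ u, g u * K p u := by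
    intro p
    rw [lintegral_mul_posPartRpow_mul_one_sub_sq_sub_sq g β hc (p * v) p, mul_assoc,
      ← lintegral_const_mul' _ _ (posPartRpow_ne_top _ _)]
    congr 2 with s
    ring
  -- both arguments equal `1 - p² - u² - v² + 2puv`
  have hK_symm : ∀ p u, K p u = posPartRpow β ((1 - v ^ 2) * (1 - u ^ 2) - (p - u * v) ^ 2) :=
    fun p u => by simp only [K]; ring_nf
  have houter : ∀ u, ∫⁻ p, K p u = k * posPartRpow (β + 1 / 2) (1 - u ^ 2) *
      ∫⁻ t, posPartRpow β (1 - t ^ 2) := by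
    intro u
    simp only [hK_symm]
    simpa only [one_mul] using
      lintegral_mul_posPartRpow_mul_one_sub_sq_sub_sq (fun _ => 1) β hc (u * v) u
  refine (ENNReal.mul_right_inj hk ofReal_ne_top).1 ?_
  calc k * ∫⁻ p, ∫⁻ s, g (p * v + √(1 - v ^ 2) * √(1 - p ^ 2) * s) *
        posPartRpow (β + 1 / 2) (1 - p ^ 2) * posPartRpow β (1 - s ^ 2)
      = ∫⁻ p, ∫⁻ u, g u * K p u :=
        (lintegral_const_mul' _ _ ofReal_ne_top).symm.trans (lintegral_congr hinner)
    _ = ∫⁻ u, ∫⁻ p, g u * K p u :=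
        lintegral_lintegral_swap ((hg.comp measurable_snd).mul hK).aemeasurable
    _ = ∫⁻ u, k * ((∫⁻ t, posPartRpow β (1 - t ^ 2)) *
          (g u * posPartRpow (β + 1 / 2) (1 - u ^ 2))) := by
        congr 1 with u
        rw [lintegral_const_mul _ hK.of_uncurry_right, houter]
        ring
    _ = _ := by
        have hmeas : Measurable fun u => g u * posPartRpow (β + 1 / 2) (1 - u ^ 2) :=
          hg.mul ((measurable_posPartRpow _).comp (by fun_prop))
        rw [lintegral_const_mul' _ _ ofReal_ne_top, lintegral_const_mul _ hmeas]

lemma lintegral_lintegral_cosineLaw_eq_of_sq_eq_one {g : ℝ → ℝ≥0∞} (hg : Measurable g) (β : ℝ)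
    {v : ℝ} (hv : v ^ 2 = 1) :
    ∫⁻ p, ∫⁻ s, g (p * v + √(1 - v ^ 2) * √(1 - p ^ 2) * s) *
        posPartRpow (β + 1 / 2) (1 - p ^ 2) * posPartRpow β (1 - s ^ 2) =
      (∫⁻ t, posPartRpow β (1 - t ^ 2)) * ∫⁻ u, g u * posPartRpow (β + 1 / 2) (1 - u ^ 2) := by
  have hw : ∀ γ : ℝ, Measurable fun t : ℝ => posPartRpow γ (1 - t ^ 2) := fun γ =>
    (measurable_posPartRpow γ).comp (by fun_prop)
  have hreflect : ∫⁻ p, g (p * v) * posPartRpow (β + 1 / 2) (1 - p ^ 2) =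
      ∫⁻ u, g u * posPartRpow (β + 1 / 2) (1 - u ^ 2) := by
    rcases sq_eq_one_iff.mp hv with rfl | rfl
    · simp
    · rw [← lintegral_neg_eq_self (μ := volume)]
      congr 1 with p
      rw [neg_mul_neg, mul_one, neg_sq]
  simp only [hv, sub_self, sqrt_zero, zero_mul, add_zero]
  calc ∫⁻ p, ∫⁻ s, g (p * v) * posPartRpow (β + 1 / 2) (1 - p ^ 2) * posPartRpow β (1 - s ^ 2)
      = ∫⁻ p, g (p * v) * posPartRpow (β + 1 / 2) (1 - p ^ 2) *
          ∫⁻ t, posPartRpow β (1 - t ^ 2) := by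
        congr 1 with p
        exact lintegral_const_mul _ (hw β)
    _ = _ := by
        have hmeas : Measurable fun p => g (p * v) * posPartRpow (β + 1 / 2) (1 - p ^ 2) :=
          (hg.comp (measurable_mul_const v)).mul (hw _)
        rw [lintegral_mul_const _ hmeas, hreflect, mul_comm]

theorem lintegral_lintegral_cosineLaw_eq {g : ℝ → ℝ≥0∞} (hg : Measurable g) (β : ℝ) {v : ℝ}
    (hv : v ^ 2 ≤ 1) :
    ∫⁻ p, ∫⁻ s, g (p * v + √(1 - v ^ 2) * √(1 - p ^ 2) * s) *
        posPartRpow (β + 1 / 2) (1 - p ^ 2) * posPartRpow β (1 - s ^ 2) =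
      (∫⁻ t, posPartRpow β (1 - t ^ 2)) * ∫⁻ u, g u * posPartRpow (β + 1 / 2) (1 - u ^ 2) :=
  hv.lt_or_eq.elim (lintegral_lintegral_cosineLaw_eq_of_sq_lt_one hg β)
    (lintegral_lintegral_cosineLaw_eq_of_sq_eq_one hg β)

lemma integrableOn_one_sub_sq_rpow {β : ℝ} (hβ : -1 < β) :
    IntegrableOn (fun t : ℝ => (1 - t ^ 2) ^ β) (Ioo (-1) 1) := by
  have hright : IntervalIntegrable (fun t : ℝ => (1 - t ^ 2) ^ β) volume 0 1 := by
    have hsing : IntervalIntegrable (fun t : ℝ => (1 - t) ^ β) volume 0 1 := by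
      simpa using ((intervalIntegrable_rpow' hβ (a := 0) (b := 1)).comp_sub_left 1).symm
    refine (hsing.mul_continuousOn (g := fun t => (1 + t) ^ β) ?_).congr ?_
    · exact ContinuousOn.rpow_const (by fun_prop) fun t ht => Or.inl (by
        rw [uIcc_of_le zero_le_one] at ht; linarith [ht.1])
    · intro t ht
      rw [uIoc_of_le zero_le_one] at ht
      show (1 - t) ^ β * (1 + t) ^ β = (1 - t ^ 2) ^ β
      rw [← mul_rpow (by linarith [ht.2]) (by linarith [ht.1])]
      ring_nf
  have hleft : IntervalIntegrable (fun t : ℝ => (1 - t ^ 2) ^ β) volume (-1) 0 := by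
    simpa using ((IntervalIntegrable.iff_comp_neg).1 hright).symm
  exact (intervalIntegrable_iff_integrableOn_Ioo_of_le (by norm_num)).1 (hleft.trans hright)

lemma setLIntegral_Ioo_mul_enorm_one_sub_sq_rpow (φ : ℝ → ℝ≥0∞) (β : ℝ) :
    ∫⁻ t in Ioo (-1) 1, φ t * ‖(1 - t ^ 2) ^ β‖ₑ = ∫⁻ t, φ t * posPartRpow β (1 - t ^ 2) := by
  rw [← lintegral_indicator measurableSet_Ioo]
  congr 1 with t
  by_cases ht : t ∈ Ioo (-1 : ℝ) 1
  · rw [indicator_of_mem ht, enorm_one_sub_sq_rpow ht]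
  · rw [indicator_of_notMem ht, posPartRpow_one_sub_sq_of_notMem ht, mul_zero]

lemma lintegral_posPartRpow_one_sub_sq_lt_top {β : ℝ} (hβ : -1 < β) :
    ∫⁻ t, posPartRpow β (1 - t ^ 2) < ∞ := by
  have h := setLIntegral_Ioo_mul_enorm_one_sub_sq_rpow (fun _ => 1) β
  simp only [one_mul] at h
  exact h ▸ (integrableOn_one_sub_sq_rpow hβ).2

lemma setLIntegral_Ioo_setLIntegral_Ioo_mul_enorm_one_sub_sq_rpow (G : ℝ → ℝ → ℝ≥0∞) (α β : ℝ) :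
    ∫⁻ p in Ioo (-1) 1, ∫⁻ s in Ioo (-1) 1, G p s * ‖(1 - p ^ 2) ^ α‖ₑ * ‖(1 - s ^ 2) ^ β‖ₑ =
      ∫⁻ p, ∫⁻ s, G p s * posPartRpow α (1 - p ^ 2) * posPartRpow β (1 - s ^ 2) := by
  rw [← lintegral_indicator measurableSet_Ioo]
  congr 1 with p
  by_cases hp : p ∈ Ioo (-1 : ℝ) 1
  · rw [indicator_of_mem hp, setLIntegral_Ioo_mul_enorm_one_sub_sq_rpow, enorm_one_sub_sq_rpow hp]
  · simp [indicator_of_notMem hp, posPartRpow_one_sub_sq_of_notMem hp]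

lemma integral_integral_le_toReal_lintegral_lintegral {X Y : Type*} [MeasurableSpace X]
    [MeasurableSpace Y] {μ : Measure X} {ν : Measure Y} {F : X → Y → ℝ}
    (h : ∫⁻ x, ∫⁻ y, ‖F x y‖ₑ ∂ν ∂μ ≠ ∞) :
    ∫ x, ∫ y, F x y ∂ν ∂μ ≤ (∫⁻ x, ∫⁻ y, ‖F x y‖ₑ ∂ν ∂μ).toReal :=
  calc ∫ x, ∫ y, F x y ∂ν ∂μ
      ≤ ‖∫ x, ∫ y, F x y ∂ν ∂μ‖ := le_norm_self _
    _ ≤ (∫⁻ x, ENNReal.ofReal ‖∫ y, F x y ∂ν‖ ∂μ).toReal := norm_integral_le_lintegral_norm _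
    _ ≤ _ := toReal_mono h (lintegral_mono fun x => by
        rw [ofReal_norm]
        exact enorm_integral_le_lintegral_enorm _)

lemma ofReal_setIntegral_Ioo_eq_lintegral_posPartRpow {f : ℝ → ℝ} {α : ℝ}
    (hf : IntegrableOn (fun u => |f u| * (1 - u ^ 2) ^ α) (Icc (-1) 1)) :
    ENNReal.ofReal (∫ u in Ioo (-1) 1, |f u| * (1 - u ^ 2) ^ α) =
      ∫⁻ u, ‖f u‖ₑ * posPartRpow α (1 - u ^ 2) := by
  have hnonneg : ∀ u ∈ Ioo (-1 : ℝ) 1, 0 ≤ |f u| * (1 - u ^ 2) ^ α := fun u hu =>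
    mul_nonneg (abs_nonneg _) (rpow_nonneg (by nlinarith [hu.1, hu.2]) _)
  rw [ofReal_integral_eq_lintegral_ofReal (hf.mono_set Ioo_subset_Icc_self)
    ((ae_restrict_iff' measurableSet_Ioo).2 (ae_of_all _ hnonneg)),
    ← setLIntegral_Ioo_mul_enorm_one_sub_sq_rpow]
  refine setLIntegral_congr_fun measurableSet_Ioo fun u hu => ?_
  rw [← enorm_of_nonneg (hnonneg u hu), enorm_mul, enorm_abs]

/-- For `d ≥ 2`, `μ ≥ 0` there is a constant `c = c(d,μ)` such that for every
`v ∈ [-1,1]` and every measurable `f` with `|f(u)|(1-u²)^{(d-2)/2+μ}` integrable,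
`∫_{-1}^1 ∫_{-1}^1 |f(pv + √(1-v²)√(1-p²) s)| (1-p²)^{(d-2)/2+μ} (1-s²)^{(d-3)/2+μ} ds dp
  ≤ c ∫_{-1}^1 |f(u)| (1-u²)^{(d-2)/2+μ} du`. -/
theorem double_integral_bound (d : ℕ) (hd : 2 ≤ d) (μ : ℝ) (hμ : 0 ≤ μ) :
    ∃ c : ℝ, ∀ f : ℝ → ℝ, Measurable f →
      IntegrableOn (fun u => |f u| * (1 - u ^ 2) ^ (((d : ℝ) - 2) / 2 + μ))
        (Set.Icc (-1 : ℝ) 1) →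
      ∀ v ∈ Set.Icc (-1 : ℝ) 1,
        (∫ p in (-1 : ℝ)..1, ∫ s in (-1 : ℝ)..1,
            |f (p * v + Real.sqrt (1 - v ^ 2) * Real.sqrt (1 - p ^ 2) * s)| *
              (1 - p ^ 2) ^ (((d : ℝ) - 2) / 2 + μ) *
              (1 - s ^ 2) ^ (((d : ℝ) - 3) / 2 + μ)) ≤
          c * ∫ u in (-1 : ℝ)..1, |f u| * (1 - u ^ 2) ^ (((d : ℝ) - 2) / 2 + μ) := by
  have hβ : -1 < ((d : ℝ) - 3) / 2 + μ := by
    have : (2 : ℝ) ≤ d := by exact_mod_cast hd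
    linarith
  have hα : ((d : ℝ) - 2) / 2 + μ = ((d : ℝ) - 3) / 2 + μ + 1 / 2 := by ring
  set β := ((d : ℝ) - 3) / 2 + μ
  refine ⟨(∫⁻ t, posPartRpow β (1 - t ^ 2)).toReal, fun f hf hInt v hv => ?_⟩
  rw [hα] at hInt ⊢
  have hv2 : v ^ 2 ≤ 1 := by nlinarith [hv.1, hv.2]
  simp only [intervalIntegral.integral_of_le (neg_le_self zero_le_one),
    Measure.restrict_congr_set Ioo_ae_eq_Ioc.symm]
  refine (integral_integral_le_toReal_lintegral_lintegral ?_).trans_eq ?_ <;>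
    simp only [enorm_mul, enorm_abs] <;>
    rw [setLIntegral_Ioo_setLIntegral_Ioo_mul_enorm_one_sub_sq_rpow,
      lintegral_lintegral_cosineLaw_eq hf.enorm β hv2,
      ← ofReal_setIntegral_Ioo_eq_lintegral_posPartRpow hInt]
  · exact mul_ne_top (lintegral_posPartRpow_one_sub_sq_lt_top hβ).ne ofReal_ne_top
  · rw [toReal_mul, toReal_ofReal (setIntegral_nonneg measurableSet_Ioo fun u hu =>
      mul_nonneg (abs_nonneg _) (rpow_nonneg (by nlinarith [hu.1, hu.2]) _))]
end
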